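/- arXiv:2009.12427 — 2 statements merged into one kernel-verified Lean document; each statement's English description precedes it below -/
import Mathlib

section
/- There is no homeomorphism h : ℝ³ → ℝ³ such that h(C₁) = C₁ and h(C₂) = C₁ + (5,0,0) (the translate of C₁ by the vector (5,0,0)); that is, the standard Hopf link (C₁, C₂) does not form an unlink. -/
noncomputable section

/-- ℝ³ with the Euclidean metric. -/
abbrev E3 := EuclideanSpace ℝ (Fin 3)

/-- The standard round unit circle in the x₁x₂-plane. -/
def C1 : Set E3 := {x | ∃ s : ℝ, x = ![Real.cos s, Real.sin s, 0]}

/-- The standard Hopf partner circle. -/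
def C2 : Set E3 := {x | ∃ s : ℝ, x = ![1 + Real.cos s, 0, Real.sin s]}

/-- The vector (5,0,0). -/
def v5 : E3 := WithLp.toLp 2 ![5, 0, 0]

/-- The translate of `C₁` by the vector `(5,0,0)`. -/
def C1' : Set E3 := (fun x => x + v5) '' C1


/-! The map `x ↦ (√(x₀² + x₁²) - 1) + x₂ i` vanishes only on `C₁`, and along `C₂` it runs once
around the unit circle. A homeomorphism `h` as in the statement would put `h(C₂) = C₁ + (5,0,0)`
inside the convex half-space `x₀ ≥ 4`, which misses `h(C₁) = C₁`. Contracting the loop `h(C₂)`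
inside that half-space and pulling back by `h⁻¹` would contract the unit circle in `ℂ \ {0}`;
but lifting through the covering `exp : ℂ → ℂ \ {0}` turns it into a path from `0` to `2πi`. -/

open Real unitInterval

def expLoop : C(I, {z : ℂ // z ≠ 0}) :=
  ⟨fun s => ⟨Complex.exp (2 * π * Complex.I * s), Complex.exp_ne_zero _⟩, by fun_prop⟩

theorem expLoop_not_homotopicRel_const :
    ¬ expLoop.HomotopicRel (.const I ⟨1, one_ne_zero⟩) {0, 1} := by
  intro hom
  have cov := Complex.isCoveringMap_exp
  have h₀ : expLoop 0 = ⟨Complex.exp 0, Complex.exp_ne_zero 0⟩ := by ext; simp [expLoop]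
  have key := cov.liftPath_apply_one_eq_of_homotopicRel hom 0 h₀ (by ext; simp)
  have lift_expLoop : (fun s : I => 2 * π * Complex.I * s) = cov.liftPath expLoop 0 h₀ :=
    (cov.eq_liftPath_iff _).mpr ⟨by fun_prop, rfl, by simp⟩
  rw [cov.liftPath_const (by ext; simp), ← lift_expLoop] at key
  simp [pi_ne_zero, Complex.I_ne_zero] at key

theorem SimplyConnectedSpace.comp_ne_expLoop {Y : Type*} [TopologicalSpace Y]
    [SimplyConnectedSpace Y] (g : C(Y, {z : ℂ // z ≠ 0})) (p : C(I, Y)) (hp : p 0 = p 1) :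
    g.comp p ≠ expLoop := by
  intro hgp
  let loop : Path (p 0) (p 0) := ⟨p, rfl, hp.symm⟩
  have hg : g (p 0) = ⟨1, one_ne_zero⟩ := by
    simpa [expLoop] using DFunLike.congr_fun hgp 0
  apply expLoop_not_homotopicRel_const
  rw [← hgp, ← hg]
  exact (SimplyConnectedSpace.paths_homotopic loop (.refl _)).map g

def meridianCoord (x : E3) : ℂ := (√(x 0 ^ 2 + x 1 ^ 2) - 1 : ℝ) + x 2 * Complex.I

@[fun_prop]
theorem continuous_meridianCoord : Continuous meridianCoord := by
  unfold meridianCoord; fun_prop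

theorem mem_C1_of_meridianCoord_eq_zero {x : E3} (hx : meridianCoord x = 0) : x ∈ C1 := by
  have hre : √(x 0 ^ 2 + x 1 ^ 2) = 1 := by
    simpa [meridianCoord, sub_eq_zero] using congrArg Complex.re hx
  have him : x 2 = 0 := by simpa [meridianCoord] using congrArg Complex.im hx
  obtain ⟨θ, hθ⟩ := (Complex.norm_eq_one_iff (x 0 + x 1 * Complex.I)).mp
    (by rwa [Complex.norm_add_mul_I])
  have hcos : cos θ = x 0 := by
    simpa [Complex.exp_ofReal_mul_I_re] using congrArg Complex.re hθ
  have hsin : sin θ = x 1 := by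
    simpa [Complex.exp_ofReal_mul_I_im] using congrArg Complex.im hθ
  refine ⟨θ, ?_⟩
  ext i; fin_cases i <;> simp [hcos, hsin, him]

def hopfLoop : C(I, E3) :=
  ⟨fun s => WithLp.toLp 2 ![1 + cos (2 * π * s), 0, sin (2 * π * s)], by fun_prop⟩

theorem hopfLoop_mem_C2 (s : I) : hopfLoop s ∈ C2 := ⟨2 * π * s, rfl⟩

theorem hopfLoop_one : hopfLoop 1 = hopfLoop 0 := by
  ext i; fin_cases i <;> simp [hopfLoop]

theorem meridianCoord_hopfLoop (s : I) :
    meridianCoord (hopfLoop s) = Complex.exp (2 * π * Complex.I * s) := by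
  have hr : √((1 + cos (2 * π * s)) ^ 2) = 1 + cos (2 * π * s) :=
    sqrt_sq (by linarith [neg_one_le_cos (2 * π * s)])
  rw [show 2 * π * Complex.I * s = (2 * π * s : ℝ) * Complex.I by push_cast; ring,
    Complex.exp_mul_I]
  simp [meridianCoord, hopfLoop, hr]

theorem C1_subset_coord_zero_le_one : C1 ⊆ {x | x 0 ≤ 1} := by
  rintro x ⟨s, hs⟩
  simpa [hs] using cos_le_one s

theorem C1'_subset_four_le_coord_zero : C1' ⊆ {x | 4 ≤ x 0} := by
  rintro _ ⟨x, ⟨s, hs⟩, rfl⟩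
  have hx : x 0 = cos s := by simp [hs]
  show 4 ≤ x 0 + v5 0
  norm_num [hx, v5]
  linarith [neg_one_le_cos s]

/-- The standard Hopf link `(C₁, C₂)` is not an unlink: no self-homeomorphism of ℝ³
takes `C₁` to `C₁` and `C₂` to `C₁ + (5,0,0)`. -/
theorem hopf_link_not_unlink :
    ¬ ∃ h : E3 ≃ₜ E3, h '' C1 = C1 ∧ h '' C2 = C1' := by
  rintro ⟨h, hC1, hC2⟩
  let K : Set E3 := {x | 4 ≤ x 0}
  have : ContractibleSpace K :=
    (convex_halfSpace_ge (EuclideanSpace.proj 0 : E3 →L[ℝ] ℝ).isLinear 4).contractibleSpace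
      ⟨v5, by norm_num [K, v5]⟩
  have hK : ∀ x ∈ K, meridianCoord (h.symm x) ≠ 0 := fun x hx h0 => by
    have hxC1 : x ∈ C1 := hC1 ▸ ⟨h.symm x, mem_C1_of_meridianCoord_eq_zero h0, h.apply_symm_apply x⟩
    have h1 : x 0 ≤ 1 := C1_subset_coord_zero_le_one hxC1
    have h4 : 4 ≤ x 0 := hx
    linarith
  let g : C(K, {z : ℂ // z ≠ 0}) := ⟨fun x => ⟨meridianCoord (h.symm x), hK x x.2⟩, by fun_prop⟩
  let p : C(I, K) :=
    ⟨fun s => ⟨h (hopfLoop s),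
      C1'_subset_four_le_coord_zero (hC2 ▸ Set.mem_image_of_mem h (hopfLoop_mem_C2 s))⟩,
      by fun_prop⟩
  refine SimplyConnectedSpace.comp_ne_expLoop g p (by simp [p, hopfLoop_one]) ?_
  ext s
  simp [g, p, expLoop, meridianCoord_hopfLoop]
end
end

section
/- Let h : ℝ³ → ℝ³ be a homeomorphism and set γ₁ = h(C₁) and γ₂ = h(C₂), so that (γ₁, γ₂) forms a Hopf link. Let D² = {z ∈ ℝ² : |z| ≤ 1} and let g : D² → ℝ³ be any continuous map satisfying g(cos s, sin s) = h(cos s, sin s, 0) for all s ∈ ℝ (so g restricted to ∂D² parametrizes γ₁). Then g(D²) ∩ γ₂ ≠ ∅; i.e., every (possibly singular) disk spanning one component of a Hopf link must intersect the other component. -/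
noncomputable section

/-- ℝ² with the Euclidean metric. -/
abbrev E2 := EuclideanSpace ℝ (Fin 2)

/-- The closed unit disk `D² ⊆ ℝ²`. -/
def D2 : Set E2 := Metric.closedBall 0 1


/-!
The map `ℓ x = (1 - √((x₀ - 1)² + x₂²)) + x₁ i` vanishes exactly on `C₂` and sends the point
`(cos s, sin s, 0)` of `C₁` to `e^{is}`. If `g(D²)` missed `γ₂`, then `ℓ ∘ h⁻¹ ∘ g` would be a
nowhere-vanishing map on the simply connected disk, hence would have a continuous logarithm
(lift through the covering `exp : ℂ → ℂ \ {0}`). Along the boundary circle that logarithm would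
differ from `s ↦ i s` by a constant, which is impossible: the boundary loop closes up at `s = 2π`,
while `i s` has increased by `2πi`.
-/

open Complex Set

theorem Complex.exists_continuous_exp_eq {A : Type*} [TopologicalSpace A] [SimplyConnectedSpace A]
    [LocallyPathConnectedSpace A] (f : C(A, ℂ)) (hf : ∀ a, f a ≠ 0) :
    ∃ L : C(A, ℂ), ∀ a, exp (L a) = f a := by
  obtain ⟨a₀⟩ := (inferInstance : Nonempty A)
  obtain ⟨L, ⟨-, hL⟩, -⟩ :=
    isCoveringMapOn_exp.existsUnique_continuousMap_lifts f (exp_log (hf a₀)) hf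
  exact ⟨L, congrFun hL⟩

theorem Complex.eq_mul_I_add_of_exp_eq {L : ℝ → ℂ} (hL : Continuous L)
    (h : ∀ s : ℝ, exp (L s) = exp (s * I)) (s : ℝ) : L s = s * I + L 0 := by
  have hdisc : IsDiscrete (AddSubgroup.zmultiples (2 * Real.pi * I) : Set ℂ) :=
    isDiscrete_iff_discreteTopology.mpr (NormedSpace.discreteTopology_zmultiples _)
  have hmem :
      MapsTo (fun s : ℝ => L s - s * I) univ (AddSubgroup.zmultiples (2 * Real.pi * I)) := by
    intro s _
    have hexp : exp (L s - s * I) = 1 := by rw [exp_sub, h, div_self (exp_ne_zero _)]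
    obtain ⟨n, hn⟩ := exp_eq_one_iff.mp hexp
    exact ⟨n, by simp [hn]⟩
  have hconst := isPreconnected_univ.constant_of_mapsTo hdisc (by fun_prop) hmem
    (mem_univ s) (mem_univ 0)
  simp only [ofReal_zero, zero_mul, sub_zero] at hconst
  linear_combination hconst

theorem exists_comp_ne_exp_mul_I {A : Type*} [TopologicalSpace A] [SimplyConnectedSpace A]
    [LocallyPathConnectedSpace A] {f : A → ℂ} (hf : Continuous f) (hf0 : ∀ a, f a ≠ 0)
    {b : ℝ → A} (hb : Continuous b) (hper : b (2 * Real.pi) = b 0) :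
    ∃ s : ℝ, f (b s) ≠ exp (s * I) := by
  by_contra! hfb
  obtain ⟨L, hL⟩ := exists_continuous_exp_eq ⟨f, hf⟩ hf0
  have hloop := eq_mul_I_add_of_exp_eq (L.continuous.comp hb)
    (fun s => (hL (b s)).trans (hfb s)) (2 * Real.pi)
  simp only [Function.comp_apply, hper] at hloop
  exact two_pi_I_ne_zero (by push_cast at hloop; linear_combination -hloop)

def linkingCoord (x : E3) : ℂ := ↑(1 - √((x 0 - 1) ^ 2 + x 2 ^ 2)) + ↑(x 1) * I

theorem continuous_linkingCoord : Continuous linkingCoord := by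
  unfold linkingCoord
  fun_prop

theorem linkingCoord_ne_zero {x : E3} (hx : x ∉ C2) : linkingCoord x ≠ 0 := by
  intro h0
  apply hx
  have hx1 : x 1 = 0 := by simpa [linkingCoord] using congrArg im h0
  have hsqrt : 1 = √((x 0 - 1) ^ 2 + x 2 ^ 2) := by
    simpa [linkingCoord, sub_eq_zero] using congrArg re h0
  have hsq : (x 0 - 1) ^ 2 + x 2 ^ 2 = 1 := Real.sqrt_eq_one.mp hsqrt.symm
  obtain ⟨θ, hθ⟩ := (norm_eq_one_iff (↑(x 0 - 1) + ↑(x 2) * I)).mp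
    (by rw [norm_add_mul_I, hsq, Real.sqrt_one])
  have hcos : Real.cos θ = x 0 - 1 := by simpa using congrArg re hθ
  have hsin : Real.sin θ = x 2 := by simpa using congrArg im hθ
  refine ⟨θ, ?_⟩
  ext i
  fin_cases i <;> simp [hcos, hsin, hx1]

theorem linkingCoord_C1 (s : ℝ) :
    linkingCoord (WithLp.toLp 2 ![Real.cos s, Real.sin s, 0]) = exp (s * I) := by
  have : √((Real.cos s - 1) ^ 2) = 1 - Real.cos s := by
    rw [Real.sqrt_sq_eq_abs, abs_of_nonpos (by linarith [Real.cos_le_one s])]; ring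
  simp [linkingCoord, this, exp_mul_I]

theorem toLp_cos_sin_mem_D2 (s : ℝ) : WithLp.toLp 2 ![Real.cos s, Real.sin s] ∈ D2 := by
  simp [D2, EuclideanSpace.norm_eq, Fin.sum_univ_two]

theorem spanning_disk_meets_other_component_general
    (h : E3 ≃ₜ E3) (γ₂ : Set E3) (hγ₂ : γ₂ = h '' C2)
    (g : E2 → E3) (hg : ContinuousOn g D2)
    (hbd : ∀ s : ℝ, g (WithLp.toLp 2 ![Real.cos s, Real.sin s]) = h (WithLp.toLp 2 ![Real.cos s, Real.sin s, 0])) :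
    (g '' D2 ∩ γ₂).Nonempty := by
  by_contra hdisj
  have hD2 : Convex ℝ D2 := convex_closedBall 0 1
  have := hD2.contractibleSpace ⟨0, Metric.mem_closedBall_self zero_le_one⟩
  have := hD2.locallyPathConnectedSpace
  have hf0 (p : D2) : linkingCoord (h.symm (g p)) ≠ 0 := by
    refine linkingCoord_ne_zero fun hp => hdisj ⟨g p, mem_image_of_mem g p.2, ?_⟩
    exact hγ₂ ▸ ⟨_, hp, h.apply_symm_apply _⟩
  obtain ⟨s, hs⟩ := exists_comp_ne_exp_mul_I
    (continuous_linkingCoord.comp (h.symm.continuous.comp hg.domRestrict)) hf0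
    (b := fun s => ⟨_, toLp_cos_sin_mem_D2 s⟩) (by fun_prop) (by simp)
  exact hs (by simp [hbd, linkingCoord_C1])

/-- Every (possibly singular) disk spanning one component of a Hopf link must
intersect the other component. -/
theorem spanning_disk_meets_other_component
    (h : E3 ≃ₜ E3) (γ₁ γ₂ : Set E3) (hγ₁ : γ₁ = h '' C1) (hγ₂ : γ₂ = h '' C2)
    (g : E2 → E3) (hg : ContinuousOn g D2)
    (hbd : ∀ s : ℝ, g (WithLp.toLp 2 ![Real.cos s, Real.sin s]) = h (WithLp.toLp 2 ![Real.cos s, Real.sin s, 0])) :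
    (g '' D2 ∩ γ₂).Nonempty :=
  spanning_disk_meets_other_component_general h γ₂ hγ₂ g hg hbd
end
end
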